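/- arXiv:1105.3681 — 6 statements merged into one kernel-verified Lean document; each statement's English description precedes it below -/
import Mathlib

section
/- Let N_a, N_b ≥ 1 and 𝒩 = N_a + N_b. Let κ_1 < κ_2 < ... < κ_𝒩 be real numbers, where every index is reduced mod 𝒩 to the range {1,...,𝒩} before evaluating κ. Define g_{l,m,n} = (κ_l − κ_m)(κ_n − κ_{n+N_b})(κ_l + κ_m − κ_n − κ_{n+N_b}), where every index is reduced mod 𝒩 into {1,...,𝒩}. Then for any n ∈ ℤ, any l with n ≤ l ≤ n + N_b and any m with n + N_b ≤ m ≤ 𝒩 + n, one has g_{l,m,n} ≥ 0, and g_{l,m,n} = 0 if and only if l ≡ n or l ≡ n+N_b (mod 𝒩) and independently m ≡ n or m ≡ n+N_b (mod 𝒩). -/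
lemma core_g (p q x y : ℝ) (hpq : p < q) (hx1 : p ≤ x) (hx2 : x ≤ q)
    (hy : y ≤ p ∨ q ≤ y) :
    0 ≤ (x - y) * (p - q) * (x + y - p - q) ∧
      ((x - y) * (p - q) * (x + y - p - q) = 0 ↔ (x = p ∨ x = q) ∧ (y = p ∨ y = q)) := by
  rcases hy with hy | hy
  · have e : (x - y) * (p - q) * (x + y - p - q)
        = (x - y) * ((q - p) * (p + q - (x + y))) := by ring
    constructor
    · rw [e]
      exact mul_nonneg (by linarith) (mul_nonneg (by linarith) (by linarith))
    · rw [e]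
      constructor
      · intro h0
        rcases mul_eq_zero.1 h0 with h | h
        · exact ⟨Or.inl (by linarith), Or.inl (by linarith)⟩
        · rcases mul_eq_zero.1 h with h | h
          · exact absurd h (by intro hh; linarith)
          · exact ⟨Or.inr (by linarith), Or.inl (by linarith)⟩
      · rintro ⟨hx, hyq⟩
        have hyp : y = p := by
          rcases hyq with h | h
          · exact h
          · linarith
        subst hyp
        rcases hx with h | h <;> subst h <;> ring
  · have e : (x - y) * (p - q) * (x + y - p - q)
        = (y - x) * ((q - p) * (x + y - p - q)) := by ring
    constructor
    · rw [e]
      exact mul_nonneg (by linarith) (mul_nonneg (by linarith) (by linarith))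
    · rw [e]
      constructor
      · intro h0
        rcases mul_eq_zero.1 h0 with h | h
        · exact ⟨Or.inr (by linarith), Or.inr (by linarith)⟩
        · rcases mul_eq_zero.1 h with h | h
          · exact absurd h (by intro hh; linarith)
          · exact ⟨Or.inl (by linarith), Or.inr (by linarith)⟩
      · rintro ⟨hx, hyq⟩
        have hyp : y = q := by
          rcases hyq with h | h
          · linarith
          · exact h
        subst hyp
        rcases hx with h | h <;> subst h <;> ring

private def rhoAux (N a : ℤ) : ℤ := (a - 1) % N + 1

private lemma rhoAux_lb (N a : ℤ) (hN : 0 < N) : 1 ≤ rhoAux N a := by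
  have := Int.emod_nonneg (a - 1) (ne_of_gt hN)
  unfold rhoAux; linarith

private lemma rhoAux_ub (N a : ℤ) (hN : 0 < N) : rhoAux N a ≤ N := by
  have := Int.emod_lt_of_pos (a - 1) hN
  unfold rhoAux; linarith

private lemma rhoAux_low (N a : ℤ) (h1 : 1 ≤ a) (h2 : a ≤ N) : rhoAux N a = a := by
  have h3 : (a - 1) % N = a - 1 := Int.emod_eq_of_lt (by linarith) (by linarith)
  unfold rhoAux; rw [h3]; ring

private lemma rhoAux_high (N a : ℤ) (h1 : N + 1 ≤ a) (h2 : a ≤ 2 * N) :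
    rhoAux N a = a - N := by
  have h3 : (a - 1) % N = (a - 1 - N) % N := by simp [Int.sub_emod]
  have h4 : (a - 1 - N) % N = a - 1 - N :=
    Int.emod_eq_of_lt (by linarith) (by linarith)
  unfold rhoAux; rw [h3, h4]; ring

private lemma rhoAux_per (N a k : ℤ) : rhoAux N (a + N * k) = rhoAux N a := by
  unfold rhoAux
  rw [show a + N * k - 1 = (a - 1) + N * k by ring, Int.add_mul_emod_self_left]

private lemma rhoAux_spec (N a : ℤ) : rhoAux N a + N * ((a - 1) / N) = a := by
  have hed := Int.emod_add_mul_ediv (a - 1) N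
  unfold rhoAux; linarith

private lemma rhoAux_cong (N a b : ℤ) (hN : 0 < N) :
    (a ≡ b [ZMOD N]) ↔ rhoAux N a = rhoAux N b := by
  constructor
  · intro h
    have h1 : (a - 1) % N = (b - 1) % N := Int.ModEq.sub_right 1 h
    unfold rhoAux; rw [h1]
  · intro h
    have h1 : (a - 1) % N = (b - 1) % N := by unfold rhoAux at h; linarith
    have h2 : a - 1 ≡ b - 1 [ZMOD N] := h1
    simpa using Int.ModEq.add_right 1 h2


set_option maxHeartbeats 1000000 in
/-- Lemma 1: nonnegativity of g_{l,m,n} and characterization of equality. -/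
theorem stmt_0 (Na Nb : ℕ) (hNa : 1 ≤ Na) (hNb : 1 ≤ Nb)
    (N : ℕ) (hN : N = Na + Nb)
    (κ : ℤ → ℝ)
    (hper : ∀ n : ℤ, κ (n + N) = κ n)
    (hmono : ∀ m n : ℤ, 1 ≤ m → m < n → n ≤ N → κ m < κ n)
    (g : ℤ → ℤ → ℤ → ℝ)
    (hg : ∀ l m n : ℤ,
      g l m n = (κ l - κ m) * (κ n - κ (n + Nb)) * (κ l + κ m - κ n - κ (n + Nb)))
    (n l m : ℤ)
    (hl₁ : n ≤ l) (hl₂ : l ≤ n + Nb)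
    (hm₁ : n + Nb ≤ m) (hm₂ : m ≤ N + n) :
    0 ≤ g l m n ∧
      (g l m n = 0 ↔
        ((l ≡ n [ZMOD N] ∨ l ≡ n + Nb [ZMOD N]) ∧
         (m ≡ n [ZMOD N] ∨ m ≡ n + Nb [ZMOD N]))) := by
  have hN0 : 0 < (N : ℤ) := by exact_mod_cast Nat.pos_of_ne_zero (by omega)
  have hNb1 : 1 ≤ (Nb : ℤ) := by exact_mod_cast hNb
  have hNbN : (Nb : ℤ) < N := by
    have : Nb < N := by omega
    exact_mod_cast this
  -- periodicity for all multiples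
  have hperk : ∀ (k : ℤ) (a : ℤ), κ (a + N * k) = κ a := by
    intro k
    induction k using Int.induction_on with
    | zero => simp
    | succ i ih =>
      intro a
      have h1 : a + (N : ℤ) * ((i : ℤ) + 1) = (a + N * i) + N := by ring
      rw [h1, hper, ih]
    | pred i ih =>
      intro a
      have h1 : a + (N : ℤ) * (-(i : ℤ) - 1) + N = a + N * (-(i : ℤ)) := by ring
      have := hper (a + (N : ℤ) * (-(i : ℤ) - 1))
      rw [h1] at this
      rw [← this, ih]
  have hκρ : ∀ a : ℤ, κ a = κ (rhoAux N a) := by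
    intro a
    conv_lhs => rw [← rhoAux_spec (N : ℤ) a]
    exact hperk _ _
  have hρlb : ∀ a : ℤ, 1 ≤ rhoAux N a := fun a => rhoAux_lb _ a hN0
  have hρub : ∀ a : ℤ, rhoAux N a ≤ N := fun a => rhoAux_ub _ a hN0
  -- order/injectivity facts
  have hlt : ∀ a b : ℤ, rhoAux N a < rhoAux N b → κ a < κ b := by
    intro a b h
    rw [hκρ a, hκρ b]
    exact hmono _ _ (hρlb a) h (hρub b)
  have heqκ : ∀ a b : ℤ, rhoAux N a = rhoAux N b → κ a = κ b := by
    intro a b h; rw [hκρ a, hκρ b, h]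
  have hle : ∀ a b : ℤ, κ a ≤ κ b ↔ rhoAux N a ≤ rhoAux N b := by
    intro a b
    constructor
    · intro h
      by_contra hc
      push_neg at hc
      exact absurd h (not_le.2 (hlt b a hc))
    · intro h
      rcases lt_or_eq_of_le h with h' | h'
      · exact (hlt a b h').le
      · exact (heqκ a b h').le
  have hEq : ∀ a b : ℤ, κ a = κ b ↔ rhoAux N a = rhoAux N b := by
    intro a b
    constructor
    · intro h
      have h1 := (hle a b).1 h.le
      have h2 := (hle b a).1 h.ge
      omega
    · exact heqκ a b
  -- normalization shift
  obtain ⟨q0, hs⟩ : ∃ q0 : ℤ, rhoAux N n = n - N * q0 :=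
    ⟨(n - 1) / N, by have := rhoAux_spec (N : ℤ) n; linarith⟩
  have hρl : rhoAux N l = rhoAux N (l - N * q0) := by
    rw [show l - (N : ℤ) * q0 = l + (N : ℤ) * (-q0) by ring, rhoAux_per]
  have hρm : rhoAux N m = rhoAux N (m - N * q0) := by
    rw [show m - (N : ℤ) * q0 = m + (N : ℤ) * (-q0) by ring, rhoAux_per]
  have hρnb : rhoAux N (n + Nb) = rhoAux N (rhoAux N n + Nb) := by
    rw [show rhoAux (N : ℤ) n + (Nb : ℤ) = (n + Nb) + (N : ℤ) * (-q0) by rw [hs]; ring,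
      rhoAux_per]
  have hn'1 : 1 ≤ rhoAux N n := hρlb n
  have hn'N : rhoAux N n ≤ N := hρub n
  have hl'1 : rhoAux N n ≤ l - N * q0 := by rw [hs]; linarith
  have hl'2 : l - N * q0 ≤ rhoAux N n + Nb := by rw [hs]; linarith
  have hm'1 : rhoAux N n + Nb ≤ m - N * q0 := by rw [hs]; linarith
  have hm'2 : m - N * q0 ≤ rhoAux N n + N := by rw [hs]; linarith
  -- main sign analysis
  have main : 0 ≤ (κ l - κ m) * (κ n - κ (n + Nb)) * (κ l + κ m - κ n - κ (n + Nb)) ∧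
      ((κ l - κ m) * (κ n - κ (n + Nb)) * (κ l + κ m - κ n - κ (n + Nb)) = 0 ↔
        (κ l = κ n ∨ κ l = κ (n + Nb)) ∧ (κ m = κ n ∨ κ m = κ (n + Nb))) := by
    by_cases hc : rhoAux N n + (Nb : ℤ) ≤ N
    · -- no wrap in the l-arc
      have hb : rhoAux N (n + Nb) = rhoAux N n + Nb := by
        rw [hρnb, rhoAux_low _ _ (by linarith) hc]
      have hll : rhoAux N l = l - N * q0 := by
        rw [hρl, rhoAux_low _ _ (by linarith) (by linarith)]
      have hpq : κ n < κ (n + Nb) := hlt _ _ (by rw [hb]; linarith)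
      have hx1 : κ n ≤ κ l := (hle _ _).2 (by rw [hll]; linarith)
      have hx2 : κ l ≤ κ (n + Nb) := (hle _ _).2 (by rw [hll, hb]; linarith)
      have hy : κ m ≤ κ n ∨ κ (n + Nb) ≤ κ m := by
        by_cases hmN : m - N * q0 ≤ (N : ℤ)
        · right
          have hmm : rhoAux N m = m - N * q0 := by
            rw [hρm, rhoAux_low _ _ (by linarith) hmN]
          exact (hle _ _).2 (by rw [hmm, hb]; linarith)
        · left
          have hmm : rhoAux N m = m - N * q0 - N := by
            rw [hρm, rhoAux_high _ _ (by linarith) (by linarith)]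
          exact (hle _ _).2 (by rw [hmm]; linarith)
      exact core_g (κ n) (κ (n + Nb)) (κ l) (κ m) hpq hx1 hx2 hy
    · -- wrap occurs in the l-arc
      push_neg at hc
      have hb : rhoAux N (n + Nb) = rhoAux N n + Nb - N := by
        rw [hρnb, rhoAux_high _ _ (by linarith) (by linarith)]
      have hqp : κ (n + Nb) < κ n := hlt _ _ (by rw [hb]; linarith)
      have hmm : rhoAux N m = m - N * q0 - N := by
        rw [hρm, rhoAux_high _ _ (by linarith) (by linarith)]
      have hy1 : κ (n + Nb) ≤ κ m := (hle _ _).2 (by rw [hmm, hb]; linarith)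
      have hy2 : κ m ≤ κ n := (hle _ _).2 (by rw [hmm]; linarith)
      have hx : κ l ≤ κ (n + Nb) ∨ κ n ≤ κ l := by
        by_cases hlN : l - N * q0 ≤ (N : ℤ)
        · right
          have hll : rhoAux N l = l - N * q0 := by
            rw [hρl, rhoAux_low _ _ (by linarith) hlN]
          exact (hle _ _).2 (by rw [hll]; linarith)
        · left
          have hll : rhoAux N l = l - N * q0 - N := by
            rw [hρl, rhoAux_high _ _ (by linarith) (by linarith)]
          exact (hle _ _).2 (by rw [hll, hb]; linarith)
      have main2 := core_g (κ (n + Nb)) (κ n) (κ m) (κ l) hqp hy1 hy2 hx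
      have e2 : (κ l - κ m) * (κ n - κ (n + Nb)) * (κ l + κ m - κ n - κ (n + Nb))
          = (κ m - κ l) * (κ (n + Nb) - κ n) * (κ m + κ l - κ (n + Nb) - κ n) := by
        ring
      constructor
      · rw [e2]; exact main2.1
      · rw [e2, main2.2]; tauto
  have c1 : (l ≡ n [ZMOD (N : ℤ)]) ↔ κ l = κ n :=
    (rhoAux_cong _ l n hN0).trans (hEq l n).symm
  have c2 : (l ≡ n + (Nb : ℤ) [ZMOD (N : ℤ)]) ↔ κ l = κ (n + Nb) :=
    (rhoAux_cong _ l (n + Nb) hN0).trans (hEq l (n + Nb)).symm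
  have c3 : (m ≡ n [ZMOD (N : ℤ)]) ↔ κ m = κ n :=
    (rhoAux_cong _ m n hN0).trans (hEq m n).symm
  have c4 : (m ≡ n + (Nb : ℤ) [ZMOD (N : ℤ)]) ↔ κ m = κ (n + Nb) :=
    (rhoAux_cong _ m (n + Nb) hN0).trans (hEq m (n + Nb)).symm
  rw [hg l m n]
  refine ⟨main.1, main.2.trans ?_⟩
  rw [c1, c2, c3, c4]
end

section
/- With notation as in the Binet–Cauchy expansion of τ(x) = det(V e^{K(x)} D): if all maximal minors D(n_1,...,n_{N_b}) of D are non-negative and at least one is strictly positive, then τ(x) > 0 for all x ∈ ℝ², so the potential u(x) = −2 ∂²_{x_1} log τ(x) is regular (τ has no zeros). -/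
/-!
By the Cauchy–Binet formula, `det (V * (E * D))` with `E` the diagonal matrix of exponentials is
the sum, over strictly increasing `e : Fin Nb → Fin NN`, of the `e`-th maximal minor of `V`
times that of `E * D`. The former is a Vandermonde determinant in the increasing nodes
`κ ∘ e`, hence positive; the latter is a product of exponentials times the corresponding minor
of `D`. So every term is nonnegative and the one given by `hpos` is positive.
-/

open Matrix Finset

-- An injective tuple is uniquely its sorted (strictly monotone) version composed with a
-- permutation.
theorem Finset.sum_injective_eq_sum_strictMono_sum_perm {m : ℕ} {ι M : Type*} [LinearOrder ι]
    [Fintype ι] [AddCommMonoid M] (g : (Fin m → ι) → M) :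
    ∑ p with Function.Injective p, g p =
      ∑ f : Fin m → ι with StrictMono f, ∑ σ : Equiv.Perm (Fin m), g (f ∘ σ) := by
  rw [← sum_product']
  symm
  refine sum_nbij' (fun q ↦ q.1 ∘ q.2) (fun p ↦ (p ∘ Tuple.sort p, (Tuple.sort p)⁻¹))
    ?_ ?_ ?_ ?_ (fun _ _ ↦ rfl)
  · rintro ⟨f, σ⟩ h
    simp only [mem_product, mem_filter, mem_univ, true_and, and_true] at h ⊢
    exact h.injective.comp σ.injective
  · intro p hp
    simp only [mem_product, mem_filter, mem_univ, true_and, and_true] at hp ⊢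
    exact (Tuple.monotone_sort p).strictMono_of_injective (hp.comp (Equiv.injective _))
  · rintro ⟨f, σ⟩ h
    simp only [mem_product, mem_filter, mem_univ, true_and, and_true] at h
    have hsorted : f ∘ σ ∘ Tuple.sort (f ∘ σ) = f := by
      rw [← Function.comp_assoc, Tuple.comp_perm_comp_sort_eq_comp_sort,
        Tuple.sort_eq_refl_iff_monotone.mpr h.monotone]
      rfl
    have hσ : σ * Tuple.sort (f ∘ σ) = 1 :=
      Equiv.ext fun i ↦ h.injective (congrFun hsorted i)
    simp only [Prod.mk.injEq]
    exact ⟨hsorted, inv_eq_of_mul_eq_one_left hσ⟩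
  · intro p _
    ext i
    simp

namespace Matrix

variable {R : Type*} [CommRing R] {m : ℕ} {ι : Type*}

theorem det_mul_eq_sum_prod_mul_det_submatrix [Fintype ι] (A : Matrix (Fin m) ι R)
    (B : Matrix ι (Fin m) R) :
    (A * B).det = ∑ p : Fin m → ι, (∏ i, B (p i) i) * (A.submatrix id p).det := by
  calc (A * B).det = ∑ p : Fin m → ι, ∑ σ : Equiv.Perm (Fin m),
        (Equiv.Perm.sign σ : R) * ∏ i, A (σ i) (p i) * B (p i) i := by
        simp only [det_apply', mul_apply, prod_univ_sum, mul_sum, Fintype.piFinset_univ]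
        rw [sum_comm]
    _ = _ := by
        simp only [det_apply', submatrix_apply, id_eq, prod_mul_distrib, mul_sum]
        exact sum_congr rfl fun p _ ↦ sum_congr rfl fun σ _ ↦ by ring

theorem det_submatrix_id_eq_zero_of_not_injective (A : Matrix (Fin m) ι R) {p : Fin m → ι}
    (hp : ¬Function.Injective p) : (A.submatrix id p).det = 0 := by
  obtain ⟨i, j, hij, hne⟩ : ∃ i j, p i = p j ∧ i ≠ j := by
    simpa [Function.Injective] using hp
  exact det_zero_of_column_eq hne fun k ↦ by simp [hij]

theorem sum_perm_prod_mul_det_submatrix_comp (A : Matrix (Fin m) ι R) (B : Matrix ι (Fin m) R)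
    (f : Fin m → ι) :
    ∑ σ : Equiv.Perm (Fin m), (∏ i, B (f (σ i)) i) * (A.submatrix id (f ∘ σ)).det =
      (A.submatrix id f).det * (B.submatrix f id).det := by
  rw [det_apply' (B.submatrix f id), mul_sum]
  refine sum_congr rfl fun σ _ ↦ ?_
  rw [show A.submatrix id (f ∘ σ) = (A.submatrix id f).submatrix id σ from rfl, det_permute']
  simp only [submatrix_apply, id_eq]
  ring

/-- **Cauchy–Binet formula**. -/
theorem det_mul_eq_sum_strictMono [LinearOrder ι] [Fintype ι] (A : Matrix (Fin m) ι R)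
    (B : Matrix ι (Fin m) R) :
    (A * B).det =
      ∑ f : Fin m → ι with StrictMono f, (A.submatrix id f).det * (B.submatrix f id).det := by
  have vanish (p : Fin m → ι) (hp : ¬Function.Injective p) :
      (∏ i, B (p i) i) * (A.submatrix id p).det = 0 := by
    rw [det_submatrix_id_eq_zero_of_not_injective A hp, mul_zero]
  rw [det_mul_eq_sum_prod_mul_det_submatrix,
    ← sum_filter_of_ne (p := Function.Injective) fun p _ h ↦ not_imp_comm.mp (vanish p) h,
    sum_injective_eq_sum_strictMono_sum_perm]
  exact sum_congr rfl fun f _ ↦ sum_perm_prod_mul_det_submatrix_comp A B f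

theorem det_submatrix_diagonal_mul [Fintype ι] [DecidableEq ι] (d : ι → R)
    (D : Matrix ι (Fin m) R) (f : Fin m → ι) :
    ((diagonal d * D).submatrix f id).det = (∏ i, d (f i)) * (D.submatrix f id).det := by
  rw [show (diagonal d * D).submatrix f id = diagonal (d ∘ f) * D.submatrix f id by
    ext; simp [diagonal_mul], det_mul, det_diagonal]
  rfl

section Positivity

variable [LinearOrder R] [IsStrictOrderedRing R]

theorem det_vandermonde_pos {v : Fin m → R} (hv : StrictMono v) : 0 < (vandermonde v).det := by
  rw [det_vandermonde]
  exact prod_pos fun i _ ↦ prod_pos fun j hj ↦ sub_pos.mpr (hv (mem_Ioi.mp hj))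

theorem det_mul_pos_of_det_submatrix [LinearOrder ι] [Fintype ι]
    {A : Matrix (Fin m) ι R} {B : Matrix ι (Fin m) R}
    (hA : ∀ f : Fin m → ι, StrictMono f → 0 < (A.submatrix id f).det)
    (hB : ∀ f : Fin m → ι, StrictMono f → 0 ≤ (B.submatrix f id).det)
    (hB' : ∃ f : Fin m → ι, StrictMono f ∧ 0 < (B.submatrix f id).det) :
    0 < (A * B).det := by
  rw [det_mul_eq_sum_strictMono]
  obtain ⟨e, he, hBe⟩ := hB'
  refine sum_pos' (fun f hf ↦ ?_) ⟨e, (mem_filter_univ e).mpr he, mul_pos (hA e he) hBe⟩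
  have hf : StrictMono f := (mem_filter_univ f).mp hf
  exact mul_nonneg (hA f hf).le (hB f hf)

end Positivity

end Matrix

theorem stmt_5_general (NN Nb : ℕ)
    (κ : Fin NN → ℝ) (hκ : StrictMono κ)
    (V : Matrix (Fin Nb) (Fin NN) ℝ)
    (hV : ∀ i j, V i j = κ j ^ (i : ℕ))
    (D : Matrix (Fin NN) (Fin Nb) ℝ)
    (hnonneg : ∀ e : Fin Nb → Fin NN, (∀ i j : Fin Nb, i < j → e i < e j) →
      0 ≤ (D.submatrix e id).det)
    (hpos : ∃ e : Fin Nb → Fin NN, (∀ i j : Fin Nb, i < j → e i < e j) ∧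
      0 < (D.submatrix e id).det) :
    ∀ x₁ x₂ : ℝ,
      0 < (V * Matrix.diagonal
            (fun n => Real.exp (κ n * x₁ + κ n ^ 2 * x₂)) * D).det := by
  intro x₁ x₂
  have exp_prod_pos (f : Fin Nb → Fin NN) :
      0 < ∏ i, Real.exp (κ (f i) * x₁ + κ (f i) ^ 2 * x₂) :=
    prod_pos fun _ _ ↦ Real.exp_pos _
  have hV_minor (f : Fin Nb → Fin NN) (hf : StrictMono f) : 0 < (V.submatrix id f).det := by
    rw [show V.submatrix id f = (vandermonde (κ ∘ f))ᵀ by ext; simp [hV, vandermonde],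
      det_transpose]
    exact det_vandermonde_pos (hκ.comp hf)
  rw [Matrix.mul_assoc]
  refine det_mul_pos_of_det_submatrix hV_minor (fun f hf ↦ ?_) ?_
  · rw [det_submatrix_diagonal_mul _ D]
    exact mul_nonneg (exp_prod_pos f).le (hnonneg f hf)
  · obtain ⟨e, he, hDe⟩ := hpos
    refine ⟨e, he, ?_⟩
    rw [det_submatrix_diagonal_mul _ D]
    exact mul_pos (exp_prod_pos e) hDe

/-- Regularity: nonnegative maximal minors (one positive) imply τ(x) > 0 everywhere. -/
theorem stmt_5 (NN Nb : ℕ) (hNb : 1 ≤ Nb) (hNNb : Nb ≤ NN)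
    (κ : Fin NN → ℝ) (hκ : StrictMono κ)
    (V : Matrix (Fin Nb) (Fin NN) ℝ)
    (hV : ∀ i j, V i j = κ j ^ (i : ℕ))
    (D : Matrix (Fin NN) (Fin Nb) ℝ)
    (hnonneg : ∀ e : Fin Nb → Fin NN, (∀ i j : Fin Nb, i < j → e i < e j) →
      0 ≤ (D.submatrix e id).det)
    (hpos : ∃ e : Fin Nb → Fin NN, (∀ i j : Fin Nb, i < j → e i < e j) ∧
      0 < (D.submatrix e id).det) :
    ∀ x₁ x₂ : ℝ,
      0 < (V * Matrix.diagonal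
            (fun n => Real.exp (κ n * x₁ + κ n ^ 2 * x₂)) * D).det :=
  stmt_5_general NN Nb κ hκ V hV D hnonneg hpos
end

section
/- (Part 1 of Lemma lemma3.) Let N_a, N_b ≥ 1, 𝒩 = N_a + N_b, κ : ℤ → ℝ with κ_n = κ_{n mod 𝒩}, κ_1 < ... < κ_𝒩, and K_n(x) = κ_n x_1 + κ_n² x_2. Fix n ∈ ℤ and let y_n = (κ_{n+N_b}² − κ_n², κ_n − κ_{n+N_b}) ∈ ℝ². Then for any l ∈ {n,...,n+N_b} and m ∈ {n+N_b,...,𝒩+n}, the quantity K_l(α y_n) − K_m(α y_n) (as a function of α > 0) satisfies: K_l(y_n) − K_m(y_n) > 0 unless (l mod 𝒩, m mod 𝒩) ∈ {(n,n),(n,n+N_b),(n+N_b,n),(n+N_b,n+N_b)} (mod 𝒩), in which case K_l(y_n) − K_m(y_n) = 0. -/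
/-!
With `a = κ n` and `b = κ (n + Nb)`, the difference `K l y - K m y` splits as
`orient a (κ l) b + orient b (κ m) (κ (n + N))`, where `orient u v w = (v - u) * (w - v) * (w - u)`.
This product is positive when `u < v < w` and invariant under cyclic rotation of its arguments.
Since `κ` is periodic and increasing on one period, it is therefore positive whenever `x < y < z < x + N`,
and it vanishes when `κ y` equals `κ x` or `κ z`. Both summands are of this form, with the windows
`[n, n + Nb]` and `[n + Nb, n + N]` each shorter than a period.
-/

open Function Set

def orient (u v w : ℝ) : ℝ := (v - u) * (w - v) * (w - u)

lemma orient_rotate (u v w : ℝ) : orient v w u = orient u v w := by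
  unfold orient; ring

lemma orient_pos {u v w : ℝ} (huv : u < v) (hvw : v < w) : 0 < orient u v w :=
  mul_pos (mul_pos (sub_pos.2 huv) (sub_pos.2 hvw)) (sub_pos.2 (huv.trans hvw))

lemma orient_self_left (u w : ℝ) : orient u u w = 0 := by
  simp [orient]

lemma orient_self_right (u v : ℝ) : orient u v v = 0 := by
  simp [orient]

lemma Function.Periodic.eq_of_intModEq {α : Type*} {f : ℤ → α} {N : ℤ} (hper : Periodic f N)
    {x y : ℤ} (h : x ≡ y [ZMOD N]) : f x = f y := by
  obtain ⟨k, hk⟩ := h.dvd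
  rw [show x = y - k * N by linarith]
  simpa using hper.sub_int_mul_eq (x := y) k

section Cyclic

variable {κ : ℤ → ℝ} {N : ℤ}

lemma orient_pos_of_mem_Icc (hper : Periodic κ N) (hmono : StrictMonoOn κ (Icc 1 N))
    {x y z : ℤ} (hx : x ∈ Icc 1 N) (hxy : x < y) (hyz : y < z) (hzx : z < x + N) :
    0 < orient (κ x) (κ y) (κ z) := by
  have hκ : ∀ {i j}, 1 ≤ i → i < j → j ≤ N → κ i < κ j := fun hi hij hj =>
    hmono ⟨hi, by omega⟩ ⟨by omega, hj⟩ hij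
  obtain ⟨hx1, hxN⟩ := hx
  rcases le_or_gt z N with hzN | hzN
  · exact orient_pos (hκ hx1 hxy (by omega)) (hκ (by omega) hyz hzN)
  rw [← hper.sub_eq z]
  rcases le_or_gt y N with hyN | hyN
  · rw [orient_rotate]
    exact orient_pos (hκ (by omega) (by omega) hxN) (hκ hx1 hxy hyN)
  · rw [← hper.sub_eq y, ← orient_rotate]
    exact orient_pos (hκ (by omega) (by omega) (by omega)) (hκ (by omega) (by omega) hxN)

lemma orient_pos_of_lt (hper : Periodic κ N) (hmono : StrictMonoOn κ (Icc 1 N))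
    {x y z : ℤ} (hxy : x < y) (hyz : y < z) (hzx : z < x + N) :
    0 < orient (κ x) (κ y) (κ z) := by
  obtain ⟨t, ⟨ht0, htN⟩, -⟩ := existsUnique_sub_zsmul_mem_Ioc (show 0 < N by omega) x 0
  rw [smul_eq_mul] at ht0 htN
  rw [zero_add] at htN
  rw [← hper.sub_int_mul_eq (x := x) t, ← hper.sub_int_mul_eq (x := y) t,
    ← hper.sub_int_mul_eq (x := z) t]
  exact orient_pos_of_mem_Icc hper hmono ⟨ht0, htN⟩ (by omega) (by omega) (by omega)

lemma orient_eq_zero_of_modEq (hper : Periodic κ N) {x y z : ℤ}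
    (h : y ≡ x [ZMOD N] ∨ y ≡ z [ZMOD N]) : orient (κ x) (κ y) (κ z) = 0 := by
  rcases h with h | h <;> rw [hper.eq_of_intModEq h]
  exacts [orient_self_left _ _, orient_self_right _ _]

lemma orient_pos_of_not_modEq (hper : Periodic κ N) (hmono : StrictMonoOn κ (Icc 1 N))
    {x y z : ℤ} (hxy : x ≤ y) (hyz : y ≤ z) (hzx : z < x + N)
    (h : ¬(y ≡ x [ZMOD N] ∨ y ≡ z [ZMOD N])) : 0 < orient (κ x) (κ y) (κ z) := by
  have hx : x ≠ y := by rintro rfl; exact h (Or.inl rfl)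
  have hz : y ≠ z := by rintro rfl; exact h (Or.inr rfl)
  exact orient_pos_of_lt hper hmono (lt_of_le_of_ne hxy hx) (lt_of_le_of_ne hyz hz) hzx

lemma orient_nonneg (hper : Periodic κ N) (hmono : StrictMonoOn κ (Icc 1 N))
    {x y z : ℤ} (hxy : x ≤ y) (hyz : y ≤ z) (hzx : z < x + N) :
    0 ≤ orient (κ x) (κ y) (κ z) := by
  by_cases h : y ≡ x [ZMOD N] ∨ y ≡ z [ZMOD N]
  · exact (orient_eq_zero_of_modEq hper h).ge
  · exact (orient_pos_of_not_modEq hper hmono hxy hyz hzx h).le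

end Cyclic

/-- Part 1 of Lemma 3: sign of K_l(y_n) − K_m(y_n). -/
theorem stmt_8 (Na Nb : ℕ) (hNa : 1 ≤ Na) (hNb : 1 ≤ Nb)
    (N : ℕ) (hN : N = Na + Nb)
    (κ : ℤ → ℝ)
    (hper : ∀ n : ℤ, κ (n + N) = κ n)
    (hmono : ∀ m n : ℤ, 1 ≤ m → m < n → n ≤ N → κ m < κ n)
    (K : ℤ → ℝ × ℝ → ℝ)
    (hK : ∀ j y, K j y = κ j * y.1 + κ j ^ 2 * y.2)
    (n : ℤ) (y : ℝ × ℝ)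
    (hy : y = (κ (n + Nb) ^ 2 - κ n ^ 2, κ n - κ (n + Nb)))
    (l m : ℤ)
    (hl₁ : n ≤ l) (hl₂ : l ≤ n + Nb)
    (hm₁ : n + Nb ≤ m) (hm₂ : m ≤ N + n) :
    (((l ≡ n [ZMOD N] ∨ l ≡ n + Nb [ZMOD N]) ∧
        (m ≡ n [ZMOD N] ∨ m ≡ n + Nb [ZMOD N])) →
      K l y - K m y = 0) ∧
    ((¬ ((l ≡ n [ZMOD N] ∨ l ≡ n + Nb [ZMOD N]) ∧
        (m ≡ n [ZMOD N] ∨ m ≡ n + Nb [ZMOD N]))) →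
      0 < K l y - K m y) := by
  have hperiodic : Periodic κ N := hper
  have hmono' : StrictMonoOn κ (Icc 1 (N : ℤ)) := fun i hi j hj hij => hmono i j hi.1 hij hj.2
  have hsplit : K l y - K m y =
      orient (κ n) (κ l) (κ (n + Nb)) + orient (κ (n + Nb)) (κ m) (κ (n + N)) := by
    rw [hy, hK, hK, hper]; unfold orient; ring
  have hm_iff : (m ≡ n + Nb [ZMOD N] ∨ m ≡ n + N [ZMOD N]) ↔
      (m ≡ n [ZMOD N] ∨ m ≡ n + Nb [ZMOD N]) := by
    rw [Int.modEq_add_modulus_iff, or_comm]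
  have hl_window : n + Nb < n + N := by omega
  have hm_window : n + N < n + Nb + N := by omega
  have hm₂' : m ≤ n + N := by omega
  rw [hsplit, ← hm_iff]
  constructor
  · rintro ⟨hl, hm⟩
    rw [orient_eq_zero_of_modEq hperiodic hl, orient_eq_zero_of_modEq hperiodic hm, add_zero]
  · intro h
    have hl_nonneg := orient_nonneg hperiodic hmono' hl₁ hl₂ hl_window
    have hm_nonneg := orient_nonneg hperiodic hmono' hm₁ hm₂' hm_window
    rcases not_and_or.mp h with hl | hm
    · linarith [orient_pos_of_not_modEq hperiodic hmono' hl₁ hl₂ hl_window hl]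
    · linarith [orient_pos_of_not_modEq hperiodic hmono' hm₁ hm₂' hm_window hm]
end

section
/- (Lemma l52, non-voidness at the vertex.) Let 𝒩 = N_a + N_b, N_a < N_b, κ : ℤ → ℝ periodic mod 𝒩 with κ_1 < ... < κ_𝒩, and g_{l,m,n} = (κ_l − κ_m)(κ_n − κ_{n+N_b})(κ_l + κ_m − κ_n − κ_{n+N_b}). Fix m ∈ {1,...,𝒩} and let Q_m = (κ_m, κ_m²). Then for every k with m + N_b − N_a + 1 ≤ k ≤ m + N_a − 1 (indices mod 𝒩, this range assumed nonempty, i.e., N_b < 2N_a − 1), one has 𝑞̃_{k+N_a,k}(Q_m) = −g_{k+N_a, m, k+N_a} > 0, where 𝑞̃_{ab}(q) = (κ_a − κ_b)(q_2 − (κ_a + κ_b)q_1 + κ_a κ_b). -/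
/-!
Expanding, `q̃_{k+N_a,k}(κ_m, κ_m²) = (κ_m - κ_k)(κ_k - κ_{k+N_a})(κ_{k+N_a} - κ_m)`, and periodicity
(`κ_{k+N_a+N_b} = κ_k`) turns `-g_{k+N_a,m,k+N_a}` into the same product. This cyclic product is
invariant under rotation and positive on increasing triples, so it is positive as soon as
`m < k < k + N_a < m + 𝒩`: reducing `m` into `[1, 𝒩]`, the three values of `κ` are increasing up
to a rotation, according to how many of `k`, `k + N_a` pass `𝒩`.
-/

section CyclicProduct

variable {R : Type*} [CommRing R]

def cyclicProduct (x y z : R) : R := (x - y) * (y - z) * (z - x)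

theorem cyclicProduct_rotate (x y z : R) : cyclicProduct y z x = cyclicProduct x y z := by
  unfold cyclicProduct; ring

variable [LinearOrder R] [IsStrictOrderedRing R]

theorem cyclicProduct_pos {x y z : R} (hxy : x < y) (hyz : y < z) : 0 < cyclicProduct x y z :=
  mul_pos (mul_pos_of_neg_of_neg (sub_neg.2 hxy) (sub_neg.2 hyz)) (sub_pos.2 (hxy.trans hyz))

variable {κ : ℤ → R} {N : ℤ}

theorem cyclicProduct_pos_of_mem_Icc (hper : Function.Periodic κ N)
    (hmono : StrictMonoOn κ (Set.Icc 1 N)) {i j l : ℤ} (hi : i ∈ Set.Icc 1 N)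
    (hij : i < j) (hjl : j < l) (hli : l < i + N) :
    0 < cyclicProduct (κ i) (κ j) (κ l) := by
  have ⟨hi₁, hiN⟩ := hi
  rcases le_or_gt l N with hlN | hlN
  · exact cyclicProduct_pos (hmono hi ⟨by omega, by omega⟩ hij)
      (hmono ⟨by omega, by omega⟩ ⟨by omega, hlN⟩ hjl)
  have hl : κ l = κ (l - N) := (hper.sub_eq l).symm
  rcases le_or_gt j N with hjN | hjN
  · rw [← cyclicProduct_rotate, ← cyclicProduct_rotate, hl]
    exact cyclicProduct_pos (hmono ⟨by omega, by omega⟩ hi (by omega))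
      (hmono hi ⟨by omega, hjN⟩ hij)
  · have hj : κ j = κ (j - N) := (hper.sub_eq j).symm
    rw [← cyclicProduct_rotate, hj, hl]
    exact cyclicProduct_pos (hmono ⟨by omega, by omega⟩ ⟨by omega, by omega⟩ (by omega))
      (hmono ⟨by omega, by omega⟩ hi (by omega))

theorem cyclicProduct_pos_of_lt (hper : Function.Periodic κ N)
    (hmono : StrictMonoOn κ (Set.Icc 1 N)) {i j l : ℤ}
    (hij : i < j) (hjl : j < l) (hli : l < i + N) :
    0 < cyclicProduct (κ i) (κ j) (κ l) := by
  have hN : 0 < N := by omega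
  set s := (i - 1) / N * N
  have hs : ∀ a, κ (a - s) = κ a := fun a => hper.sub_int_mul_eq ((i - 1) / N)
  have hi : i - s ∈ Set.Icc 1 N := by
    have hrem : i - s - 1 = (i - 1) % N := by rw [Int.emod_def]; ring
    have := Int.emod_nonneg (i - 1) hN.ne'
    have := Int.emod_lt_of_pos (i - 1) hN
    constructor <;> linarith
  simpa only [hs] using
    cyclicProduct_pos_of_mem_Icc hper hmono hi (j := j - s) (l := l - s)
      (by omega) (by omega) (by omega)

end CyclicProduct

theorem stmt_12_general (Na Nb : ℕ) (hNaNb : Na < Nb)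
    (N : ℕ) (hN : N = Na + Nb)
    (κ : ℤ → ℝ)
    (hper : ∀ n : ℤ, κ (n + N) = κ n)
    (hmono : ∀ m n : ℤ, 1 ≤ m → m < n → n ≤ N → κ m < κ n)
    (g : ℤ → ℤ → ℤ → ℝ)
    (hg : ∀ l m n : ℤ,
      g l m n = (κ l - κ m) * (κ n - κ (n + Nb)) * (κ l + κ m - κ n - κ (n + Nb)))
    (qt : ℤ → ℤ → ℝ × ℝ → ℝ)
    (hqt : ∀ a b q, qt a b q = (κ a - κ b) * (q.2 - (κ a + κ b) * q.1 + κ a * κ b))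
    (m : ℤ)
    (k : ℤ) (hk₁ : m + Nb - Na + 1 ≤ k) (hk₂ : k ≤ m + Na - 1) :
    qt (k + Na) k (κ m, κ m ^ 2) = - g (k + Na) m (k + Na) ∧
      0 < qt (k + Na) k (κ m, κ m ^ 2) := by
  have hwrap : κ (k + Na + Nb) = κ k := by
    rw [← hper k, hN]; push_cast; ring_nf
  have hqt_eq : qt (k + Na) k (κ m, κ m ^ 2) = cyclicProduct (κ m) (κ k) (κ (k + Na)) := by
    rw [hqt, cyclicProduct]; ring
  have hg_eq : - g (k + Na) m (k + Na) = cyclicProduct (κ m) (κ k) (κ (k + Na)) := by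
    rw [hg, hwrap, cyclicProduct]; ring
  refine ⟨hqt_eq.trans hg_eq.symm, hqt_eq ▸ ?_⟩
  exact cyclicProduct_pos_of_lt hper (fun a ha b hb hab => hmono a b ha.1 hab hb.2)
    (by omega) (by omega) (by omega)

/-- Lemma l52, non-voidness at the vertex: 𝑞̃_{k+N_a,k}(Q_m) = −g_{k+N_a,m,k+N_a} > 0. -/
theorem stmt_12 (Na Nb : ℕ) (hNa : 1 ≤ Na) (hNaNb : Na < Nb) (hNb2 : Nb < 2 * Na - 1)
    (N : ℕ) (hN : N = Na + Nb)
    (κ : ℤ → ℝ)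
    (hper : ∀ n : ℤ, κ (n + N) = κ n)
    (hmono : ∀ m n : ℤ, 1 ≤ m → m < n → n ≤ N → κ m < κ n)
    (g : ℤ → ℤ → ℤ → ℝ)
    (hg : ∀ l m n : ℤ,
      g l m n = (κ l - κ m) * (κ n - κ (n + Nb)) * (κ l + κ m - κ n - κ (n + Nb)))
    (qt : ℤ → ℤ → ℝ × ℝ → ℝ)
    (hqt : ∀ a b q, qt a b q = (κ a - κ b) * (q.2 - (κ a + κ b) * q.1 + κ a * κ b))
    (m : ℤ) (hm₁ : 1 ≤ m) (hm₂ : m ≤ N)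
    (k : ℤ) (hk₁ : m + Nb - Na + 1 ≤ k) (hk₂ : k ≤ m + Na - 1) :
    qt (k + Na) k (κ m, κ m ^ 2) = - g (k + Na) m (k + Na) ∧
      0 < qt (k + Na) k (κ m, κ m ^ 2) :=
  stmt_12_general Na Nb hNaNb N hN κ hper hmono g hg qt hqt m k hk₁ hk₂
end

section
/- (One-soliton boundedness, Fig. 2.) Let κ_1 < κ_2 be reals, K_j(x) = κ_j x_1 + κ_j² x_2 for j = 1, 2, and d > 0. Define F(x) = d(κ_1 − κ_2)e^{K_1(x)+K_2(x)} / (d e^{K_1(x)} + e^{K_2(x)}) (the discrete value Φ(x, iκ_2) of the Jost solution). For q = (q_1, q_2) ∈ ℝ², the function x ↦ e^{−(q_1 x_1 + q_2 x_2)} F(x) is bounded on ℝ² if and only if q_2 − (κ_1 + κ_2)q_1 + κ_1 κ_2 = 0 and κ_1 ≤ q_1 ≤ κ_2. -/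
/-!
Write `A₁, A₂` for the shifted phases `K_j(x) - (q₁ x₁ + q₂ x₂)`, which are linear forms. Then
`|e^{-qx} F x| = a b / (a + b)` with `a = d (κ₂ - κ₁) e^{A₁(x)}` and `b = (κ₂ - κ₁) e^{A₂(x)}`,
and `a b / (a + b)` lies between `min a b / 2` and `min a b`. So boundedness means that `min a b`
is bounded, i.e. that there is no direction `v` in which both `A₁` and `A₂` are positive (along
such a ray both exponentials blow up). On the chord `q₂ - (κ₁ + κ₂) q₁ + κ₁ κ₂ = 0` both phases
are multiples of `x₁ + (κ₁ + κ₂) x₂`, with coefficients `κ₁ - q₁` and `κ₂ - q₁` of opposite signs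
exactly when `κ₁ ≤ q₁ ≤ κ₂`. Conversely, both phases take the value `Q = q₂ - (κ₁ + κ₂) q₁ + κ₁ κ₂`
at `(κ₁ + κ₂, -1)`, so `v = Q • (κ₁ + κ₂, -1)` forces `Q = 0`, and `v = (±1, 0)` gives the bounds
on `q₁`.
-/

open Real Set Filter

section HarmonicMean

variable {𝕜 : Type*} [Field 𝕜] [LinearOrder 𝕜] [IsStrictOrderedRing 𝕜]

theorem min_div_two_le_mul_div_add {a b : 𝕜} (ha : 0 < a) (hb : 0 < b) :
    min a b / 2 ≤ a * b / (a + b) := by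
  rw [div_le_div_iff₀ two_pos (by positivity)]
  rcases min_cases a b with ⟨h, hab⟩ | ⟨h, hab⟩ <;> rw [h] <;> nlinarith

theorem mul_div_add_le_min {a b : 𝕜} (ha : 0 < a) (hb : 0 < b) :
    a * b / (a + b) ≤ min a b :=
  le_min ((div_le_iff₀ (by positivity)).2 (by nlinarith))
    ((div_le_iff₀ (by positivity)).2 (by nlinarith))

theorem bddAbove_range_mul_div_add_iff {α : Type*} {f g : α → 𝕜} (hf : ∀ x, 0 < f x)
    (hg : ∀ x, 0 < g x) :
    BddAbove (range fun x => f x * g x / (f x + g x)) ↔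
      BddAbove (range fun x => min (f x) (g x)) := by
  refine ⟨fun h => ?_, fun h => h.range_mono _ fun x => mul_div_add_le_min (hf x) (hg x)⟩
  have hdouble := h.range_comp_left (g := fun y => 2 * y) fun _ _ hy => by linarith
  refine hdouble.range_mono _ fun x => ?_
  have := min_div_two_le_mul_div_add (hf x) (hg x)
  linarith

end HarmonicMean

theorem bddAbove_range_min_mul_exp_iff {E : Type*} [AddCommGroup E] [Module ℝ E]
    {c₁ c₂ : ℝ} (hc₁ : 0 < c₁) (hc₂ : 0 < c₂) (A B : E →ₗ[ℝ] ℝ) :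
    BddAbove (range fun x => min (c₁ * exp (A x)) (c₂ * exp (B x))) ↔
      ∀ v, min (A v) (B v) ≤ 0 := by
  constructor
  · intro hbdd v
    by_contra! hm
    have hray : Tendsto (fun n : ℕ => min c₁ c₂ * exp (n * min (A v) (B v))) atTop atTop :=
      (tendsto_exp_atTop.comp (tendsto_natCast_atTop_atTop.atTop_mul_const hm)).const_mul_atTop
        (lt_min hc₁ hc₂)
    refine not_bddAbove_of_tendsto_atTop hray <|
      (hbdd.range_comp_right fun n : ℕ => (n : ℝ) • v).range_mono _ fun n => ?_
    simp only [Function.comp_apply, map_smul, smul_eq_mul]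
    refine le_min ?_ ?_ <;> gcongr
    · exact min_le_left c₁ c₂
    · exact min_le_left (A v) (B v)
    · exact min_le_right c₁ c₂
    · exact min_le_right (A v) (B v)
  · intro h
    refine ⟨max c₁ c₂, forall_mem_range.2 fun x => ?_⟩
    rcases min_le_iff.1 (h x) with hA | hB
    · calc min (c₁ * exp (A x)) (c₂ * exp (B x)) ≤ c₁ * exp (A x) := min_le_left _ _
        _ ≤ c₁ * 1 := by gcongr; exact exp_le_one_iff.2 hA
        _ ≤ max c₁ c₂ := by simp
    · calc min (c₁ * exp (A x)) (c₂ * exp (B x)) ≤ c₂ * exp (B x) := min_le_right _ _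
        _ ≤ c₂ * 1 := by gcongr; exact exp_le_one_iff.2 hB
        _ ≤ max c₁ c₂ := by simp

def shiftedPhase (κ q₁ q₂ : ℝ) : ℝ × ℝ →ₗ[ℝ] ℝ :=
  (κ - q₁) • LinearMap.fst ℝ ℝ ℝ + (κ ^ 2 - q₂) • LinearMap.snd ℝ ℝ ℝ

@[simp]
theorem shiftedPhase_apply (κ q₁ q₂ : ℝ) (x : ℝ × ℝ) :
    shiftedPhase κ q₁ q₂ x = (κ - q₁) * x.1 + (κ ^ 2 - q₂) * x.2 := rfl

theorem forall_min_shiftedPhase_nonpos_iff {κ₁ κ₂ q₁ q₂ : ℝ} (hκ : κ₁ < κ₂) :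
    (∀ v, min (shiftedPhase κ₁ q₁ q₂ v) (shiftedPhase κ₂ q₁ q₂ v) ≤ 0) ↔
      (q₂ - (κ₁ + κ₂) * q₁ + κ₁ * κ₂ = 0 ∧ κ₁ ≤ q₁ ∧ q₁ ≤ κ₂) := by
  constructor
  · intro h
    set Q := q₂ - (κ₁ + κ₂) * q₁ + κ₁ * κ₂
    have hQ₁ : shiftedPhase κ₁ q₁ q₂ (κ₁ + κ₂, -1) = Q := by simp only [shiftedPhase_apply, Q]; ring
    have hQ₂ : shiftedPhase κ₂ q₁ q₂ (κ₁ + κ₂, -1) = Q := by simp only [shiftedPhase_apply, Q]; ring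
    have hQ := h (Q • (κ₁ + κ₂, -1))
    rw [map_smul, map_smul, hQ₁, hQ₂, min_self, smul_eq_mul] at hQ
    have h₁ := h (1, 0)
    have h₂ := h (-1, 0)
    simp only [shiftedPhase_apply, min_le_iff] at h₁ h₂
    refine ⟨mul_self_eq_zero.1 (hQ.antisymm (mul_self_nonneg Q)), ?_, ?_⟩ <;> grind
  · rintro ⟨hq, h₁, h₂⟩ v
    have hprod : shiftedPhase κ₁ q₁ q₂ v * shiftedPhase κ₂ q₁ q₂ v ≤ 0 := by
      have hfactor : shiftedPhase κ₁ q₁ q₂ v * shiftedPhase κ₂ q₁ q₂ v =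
          (κ₁ - q₁) * (κ₂ - q₁) * (v.1 + (κ₁ + κ₂) * v.2) ^ 2 := by
        simp only [shiftedPhase_apply]
        rw [show q₂ = (κ₁ + κ₂) * q₁ - κ₁ * κ₂ by linarith]
        ring
      rw [hfactor]
      exact mul_nonpos_of_nonpos_of_nonneg
        (mul_nonpos_of_nonpos_of_nonneg (by linarith) (by linarith)) (sq_nonneg _)
    by_contra! hpos
    exact (mul_pos (lt_min_iff.1 hpos).1 (lt_min_iff.1 hpos).2).not_ge hprod

/-- One-soliton boundedness: e^{−qx}Φ(x,iκ₂) is bounded iff q lies on the chord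
segment q₁₂ = 0, κ₁ ≤ q₁ ≤ κ₂. -/
theorem stmt_13 (κ₁ κ₂ : ℝ) (hκ : κ₁ < κ₂) (d : ℝ) (hd : 0 < d)
    (K₁ K₂ : ℝ × ℝ → ℝ)
    (hK₁ : ∀ x, K₁ x = κ₁ * x.1 + κ₁ ^ 2 * x.2)
    (hK₂ : ∀ x, K₂ x = κ₂ * x.1 + κ₂ ^ 2 * x.2)
    (F : ℝ × ℝ → ℝ)
    (hF : ∀ x, F x = d * (κ₁ - κ₂) * Real.exp (K₁ x + K₂ x) /
      (d * Real.exp (K₁ x) + Real.exp (K₂ x)))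
    (q₁ q₂ : ℝ) :
    (∃ C : ℝ, ∀ x : ℝ × ℝ, |Real.exp (-(q₁ * x.1 + q₂ * x.2)) * F x| ≤ C) ↔
      (q₂ - (κ₁ + κ₂) * q₁ + κ₁ * κ₂ = 0 ∧ κ₁ ≤ q₁ ∧ q₁ ≤ κ₂) := by
  have hκ' : 0 < κ₂ - κ₁ := sub_pos.2 hκ
  have hval : ∀ x : ℝ × ℝ, |exp (-(q₁ * x.1 + q₂ * x.2)) * F x| =
      d * (κ₂ - κ₁) * exp (shiftedPhase κ₁ q₁ q₂ x) * ((κ₂ - κ₁) * exp (shiftedPhase κ₂ q₁ q₂ x)) /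
        (d * (κ₂ - κ₁) * exp (shiftedPhase κ₁ q₁ q₂ x) +
          (κ₂ - κ₁) * exp (shiftedPhase κ₂ q₁ q₂ x)) := by
    intro x
    have hK (κ : ℝ) : κ * x.1 + κ ^ 2 * x.2 = shiftedPhase κ q₁ q₂ x + (q₁ * x.1 + q₂ * x.2) := by
      simp only [shiftedPhase_apply]; ring
    rw [hF, hK₁, hK₂, hK, hK]
    generalize q₁ * x.1 + q₂ * x.2 = P
    rw [abs_mul, abs_div, abs_exp, abs_of_pos (add_pos (mul_pos hd (exp_pos _)) (exp_pos _)),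
      abs_mul, abs_mul, abs_of_pos hd,
      abs_sub_comm, abs_of_pos hκ', abs_exp]
    simp only [exp_add, exp_neg]
    field_simp
  simp only [hval]
  rw [← forall_min_shiftedPhase_nonpos_iff hκ,
    ← bddAbove_range_min_mul_exp_iff (mul_pos hd hκ') hκ',
    ← bddAbove_range_mul_div_add_iff (fun _ => by positivity) (fun _ => by positivity),
    bddAbove_def, exists_congr fun _ => forall_mem_range]
end

section
/- (Strip containment, part of Lemma 'inside'.) Let κ_1 < ... < κ_𝒩 (indices mod 𝒩), 𝑞̃_{ab}(q) = (κ_a − κ_b)(q_2 − (κ_a + κ_b)q_1 + κ_a κ_b), and fix m. Suppose q = (q_1, q_2) satisfies q_2 ≥ q_1² and 𝑞̃_{k+N_a,k}(q) ≥ 0 for all k = m, ..., m+N_b (indices mod 𝒩), with N_a < N_b. Then q_1 satisfies min_{m ≤ l ≤ m+N_b} κ_l ≤ q_1 ≤ max_{m ≤ l ≤ m+N_b} κ_l. -/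
open Finset

/-!
If `κ (k + Na) < κ k`, the condition at `k` says that `q` lies below the chord of the parabola
`q₂ = q₁²` over `[κ (k + Na), κ k]`; being above the parabola, `q₁` is then in that interval.
So it suffices to find such a descent `k` in the window `[m, m + Nb]` whose lower end
`κ (k + Na)` is bounded below by some `κ i` of the window. If `κ m < κ (m + Nb)`, take
`k = m + Nb`, since `k + Na = m + N`. Otherwise the window cannot lie inside one increasing
period `[cN + 1, cN + N]`, so it contains a multiple `cN` of the period together with `cN + 1`:
take `k = cN`, where `κ` attains `κ N`, and `i = cN + 1`, where `κ 1 ≤ κ Na`.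
-/

theorem mem_Icc_of_above_parabola_below_chord {a b x y : ℝ} (hab : a < b) (hpar : x ^ 2 ≤ y)
    (hchord : 0 ≤ (a - b) * (y - (a + b) * x + a * b)) : x ∈ Set.Icc a b := by
  have hbelow : y - (a + b) * x + a * b ≤ 0 := nonpos_of_mul_nonneg_right hchord (by linarith)
  have hprod : (x - a) * (x - b) ≤ 0 := by nlinarith
  constructor <;> nlinarith

theorem Int.exists_mul_mem_Ico (m : ℤ) {N : ℤ} (hN : 0 < N) :
    ∃ c : ℤ, m ≤ c * N ∧ c * N < m + N := by
  refine ⟨-((-m) / N), ?_, ?_⟩ <;>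
  · have := Int.mul_ediv_add_emod (-m) N
    have := Int.emod_nonneg (-m) hN.ne'
    have := Int.emod_lt_of_pos (-m) hN
    nlinarith

theorem exists_step_down_mem_Icc {Na Nb N : ℕ} (hNa : 1 ≤ Na) (hNb : 0 < Nb) (hN : N = Na + Nb)
    {κ : ℤ → ℝ} (hper : Function.Periodic κ N)
    (hmono : ∀ m n : ℤ, 1 ≤ m → m < n → n ≤ N → κ m < κ n) (m : ℤ) :
    ∃ k ∈ Icc m (m + Nb), ∃ i ∈ Icc m (m + Nb), κ i ≤ κ (k + Na) ∧ κ (k + Na) < κ k := by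
  by_cases hrise : κ m < κ (m + Nb)
  · have hwrap : κ (m + Nb + Na) = κ m := by
      rw [show m + Nb + Na = m + N by omega]; exact hper m
    exact ⟨m + Nb, by simp, m, by simp, by rw [hwrap], by rwa [hwrap]⟩
  obtain ⟨c, hmc, hcm⟩ := Int.exists_mul_mem_Ico m (by omega : (0 : ℤ) < N)
  have hnext : c * N + 1 ≤ m + Nb := by
    by_contra! hlate
    have hshift : ∀ x, κ (x - (c - 1) * N) = κ x := fun x => hper.sub_int_mul_eq (c - 1)
    have := hmono (m - (c - 1) * N) (m + Nb - (c - 1) * N) (by linarith) (by omega) (by linarith)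
    rw [hshift, hshift] at this
    exact hrise this
  have hval : ∀ x, κ (c * N + x) = κ x := fun x => by rw [add_comm]; exact hper.int_mul c x
  refine ⟨c * N, mem_Icc.2 ⟨hmc, by omega⟩, c * N + 1, mem_Icc.2 ⟨by omega, hnext⟩, ?_, ?_⟩
  · rw [hval, hval]
    rcases hNa.eq_or_lt with h | h
    · simp [← h]
    · exact (hmono 1 Na le_rfl (by exact_mod_cast h) (by omega)).le
  · rw [hval, show c * N = c * N + 0 by simp, hval, ← hper.eq]
    exact hmono Na N (by exact_mod_cast hNa) (by omega) le_rfl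

/-- Strip containment: the polygon defined by the chord conditions lies in the
vertical strip determined by the extreme κ_l, l = m,…,m+N_b. -/
theorem stmt_15 (Na Nb : ℕ) (hNa : 1 ≤ Na) (hNaNb : Na < Nb)
    (N : ℕ) (hN : N = Na + Nb)
    (κ : ℤ → ℝ)
    (hper : ∀ n : ℤ, κ (n + N) = κ n)
    (hmono : ∀ m n : ℤ, 1 ≤ m → m < n → n ≤ N → κ m < κ n)
    (m : ℤ) (q₁ q₂ : ℝ) (hpar : q₁ ^ 2 ≤ q₂)
    (hcond : ∀ k : ℤ, m ≤ k → k ≤ m + Nb →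
      0 ≤ (κ (k + Na) - κ k) * (q₂ - (κ (k + Na) + κ k) * q₁ + κ (k + Na) * κ k)) :
    (Finset.Icc m (m + (Nb : ℤ))).inf'
        (Finset.nonempty_Icc.mpr (by omega)) κ ≤ q₁ ∧
      q₁ ≤ (Finset.Icc m (m + (Nb : ℤ))).sup'
        (Finset.nonempty_Icc.mpr (by omega)) κ := by
  obtain ⟨k, hk, i, hi, hik, hdown⟩ :=
    exists_step_down_mem_Icc hNa (by omega) hN hper hmono m
  obtain ⟨hk₁, hk₂⟩ := mem_Icc.1 hk
  obtain ⟨hlow, hhigh⟩ := mem_Icc_of_above_parabola_below_chord hdown hpar (hcond k hk₁ hk₂)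
  exact ⟨(inf'_le κ hi).trans (hik.trans hlow), hhigh.trans (le_sup' κ hk)⟩
end
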